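/- arXiv:math/0502584 — 3 statements merged into one kernel-verified Lean document; each statement's English description precedes it below -/
import Mathlib

section
/- Let f : [0,1] → [0,1] with f(x) = (αx − αρ)/(γx + δ) for x ∈ [0,ρ] and f(x) = (x−ρ)/(1−ρ) for x ∈ (ρ,1], with parameters 0 < ρ < 1, δ > 0, −δ/ρ < γ, −δ/ρ < α < 0. Then f has exactly two fixed points in [0,1]: the point 1, and a unique fixed point ω₀ ∈ [0,ρ). -/
theorem unimodal_map_fixed_points (ρ δ γ α : ℝ)
    (hρ : 0 < ρ) (hρ1 : ρ < 1) (hδ : 0 < δ) (hγ : -(δ / ρ) < γ)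
    (hα₁ : -(δ / ρ) < α) (hα₂ : α < 0)
    (f : ℝ → ℝ)
    (hdef : ∀ x, f x = if x ≤ ρ then (α * x - α * ρ) / (γ * x + δ)
      else (x - ρ) / (1 - ρ)) :
    f 1 = 1 ∧
      ∃ ω₀ ∈ Set.Ico (0:ℝ) ρ, f ω₀ = ω₀ ∧
        ∀ x ∈ Set.Icc (0:ℝ) 1, f x = x → x = 1 ∨ x = ω₀ := by
  have hγρ : γ * ρ + δ > 0 := by
    have := hγ
    rw [neg_lt, lt_div_iff₀ hρ] at this
    nlinarith
  -- denominator positivity on [0, ρ]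
  have hden : ∀ x : ℝ, 0 ≤ x → x ≤ ρ → 0 < γ * x + δ := by
    intro x hx0 hxρ
    rcases hx0.eq_or_lt with h | h
    · rw [← h]; simpa using hδ
    · nlinarith [mul_pos h hγρ, mul_nonneg hδ.le (sub_nonneg.2 hxρ)]
  set g : ℝ → ℝ := fun x => γ * x ^ 2 + (δ - α) * x + α * ρ with hg
  have hg0 : g 0 < 0 := by simp [hg]; nlinarith
  have hgρ : 0 < g ρ := by simp [hg]; nlinarith
  have hcont : ContinuousOn g (Set.Icc 0 ρ) := by fun_prop
  -- existence of a root of g in (0, ρ)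
  obtain ⟨ω₀, hωmem, hωroot⟩ :=
    intermediate_value_Ioo hρ.le hcont (Set.mem_Ioo.2 ⟨hg0, hgρ⟩)
  obtain ⟨hω0, hωρ⟩ := hωmem
  -- uniqueness of roots of g in [0, ρ]
  have huniq : ∀ a b : ℝ, 0 ≤ a → a ≤ ρ → 0 ≤ b → b ≤ ρ → g a = 0 → g b = 0 → a = b := by
    intro a b ha0 haρ hb0 hbρ hga hgb
    simp only [hg] at hga hgb
    by_contra hne
    have hdiff : (a - b) * (γ * (a + b) + (δ - α)) = 0 := by
      linear_combination hga - hgb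
    have hsum : γ * (a + b) = α - δ := by
      rcases mul_eq_zero.1 hdiff with h | h
      · exact absurd (sub_eq_zero.1 h) hne
      · linarith
    have hprod : γ * (a * b) = α * ρ := by
      linear_combination a * hsum - hga
    have hkey : γ * ((ρ - a) * (ρ - b)) = ρ * (γ * ρ + δ) := by
      linear_combination (-ρ) * hsum + hprod
    have hρpos : 0 < ρ * (γ * ρ + δ) := mul_pos hρ hγρ
    rcases lt_trichotomy γ 0 with hlt | heq | hgt
    · have : γ * ((ρ - a) * (ρ - b)) ≤ 0 :=
        mul_nonpos_of_nonpos_of_nonneg hlt.le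
          (mul_nonneg (sub_nonneg.2 haρ) (sub_nonneg.2 hbρ))
      linarith
    · rw [heq] at hsum; simp at hsum; linarith
    · have h1 : 0 ≤ γ * (a * b) := mul_nonneg hgt.le (mul_nonneg ha0 hb0)
      nlinarith [mul_neg_of_neg_of_pos hα₂ hρ]
  -- f 1 = 1
  have hf1 : f 1 = 1 := by
    rw [hdef, if_neg (by linarith)]
    rw [div_eq_iff (by intro h; linarith [sub_eq_zero.1 h] : (1:ℝ) - ρ ≠ 0)]
    ring
  refine ⟨hf1, ω₀, ⟨hω0.le, hωρ⟩, ?_, ?_⟩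
  · -- f ω₀ = ω₀
    rw [hdef, if_pos hωρ.le]
    have hd := hden ω₀ hω0.le hωρ.le
    rw [div_eq_iff (ne_of_gt hd)]
    simp only [hg] at hωroot
    linear_combination -hωroot
  · intro x hx hfx
    obtain ⟨hx0, hx1⟩ := hx
    rw [hdef] at hfx
    by_cases hxρ : x ≤ ρ
    · rw [if_pos hxρ] at hfx
      have hd := hden x hx0 hxρ
      rw [div_eq_iff (ne_of_gt hd)] at hfx
      right
      refine huniq x ω₀ hx0 hxρ hω0.le hωρ.le ?_ hωroot
      simp only [hg]
      linear_combination -hfx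
    · rw [if_neg hxρ] at hfx
      left
      rw [div_eq_iff (by intro h; linarith [sub_eq_zero.1 h] : (1:ℝ) - ρ ≠ 0)] at hfx
      have hz : ρ * (x - 1) = 0 := by linear_combination hfx
      rcases mul_eq_zero.1 hz with h | h
      · exact absurd h (ne_of_gt hρ)
      · linarith [sub_eq_zero.1 h]
end

section
/- With f as the unimodal map f₀(x) = (αx−αρ)/(γx+δ) on [0,ρ] and f₁(x) = (x−ρ)/(1−ρ) on (ρ,1], set ρ₁ = f(0). If ρ₁ ≤ ρ and (x₀,x₁,...) ∈ X̃ is a backward orbit with x_{n+1} ∈ (ρ,1] for some n, then x_{k+1} ∈ (ρ,1] for all k ≥ n (i.e. once a backward orbit enters the right branch, it stays in it). -/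
theorem backward_orbit_stays_in_right_branch (ρ δ γ α : ℝ)
    (hρ : 0 < ρ) (hρ1 : ρ < 1) (hδ : 0 < δ) (hγ : -(δ / ρ) < γ)
    (hα₁ : -(δ / ρ) < α) (hα₂ : α < 0)
    (f : ℝ → ℝ)
    (hdef : ∀ x, f x = if x ≤ ρ then (α * x - α * ρ) / (γ * x + δ)
      else (x - ρ) / (1 - ρ))
    (hρ₁ : f 0 ≤ ρ)
    (x : ℕ → ℝ) (hmem : ∀ n, x n ∈ Set.Icc (0:ℝ) 1)
    (horb : ∀ n, f (x (n + 1)) = x n)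
    (n : ℕ) (hn : x (n + 1) ∈ Set.Ioc ρ 1) :
    ∀ k, n ≤ k → x (k + 1) ∈ Set.Ioc ρ 1 := by
  have hγρ : 0 < γ * ρ + δ := by
    have := (lt_div_iff₀ hρ).mp (neg_lt.mp hγ)
    nlinarith
  have hf0 : f 0 = -(α * ρ) / δ := by
    rw [hdef]; simp [hρ.le]
  intro k hk
  induction k, hk using Nat.le_induction with
  | base => exact hn
  | succ k hk ih =>
    have h1 : f (x (k + 1 + 1)) = x (k + 1) := horb (k + 1)
    have hx2 := hmem (k + 1 + 1)
    refine ⟨?_, hx2.2⟩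
    by_contra h
    push_neg at h
    set y := x (k + 1 + 1) with hy
    have hd : 0 < γ * y + δ := by
      rcases le_or_gt 0 γ with hg | hg
      · nlinarith [hx2.1]
      · nlinarith [hx2.1]
    have h2 : x (k + 1) = (α * y - α * ρ) / (γ * y + δ) := by
      rw [← h1, hdef]; simp [h]
    have h3 : (α * y - α * ρ) / (γ * y + δ) ≤ -(α * ρ) / δ := by
      rw [div_le_div_iff₀ hd hδ]
      nlinarith [mul_nonneg hx2.1 hγρ.le, hα₂]
    have : x (k + 1) ≤ ρ := by
      rw [h2]; exact h3.trans (hf0 ▸ hρ₁)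
    exact absurd this (not_le.mpr ih.1)
end

section
/- Let f be the unimodal map with branches f₀ (decreasing on [0,ρ]) and f₁(x) = (x−ρ)/(1−ρ) on (ρ,1], and let x̃₀ = (f^n(0), f^{n−1}(0), ..., f(0), 0, x_{n+1}, x_{n+2}, ...) ∈ X̃ with x_{n+1} = f₀^{-1}(0) = ρ. If T, T' ∈ {0,1}^ℕ agree except at index n, where T(n) = 0 and T'(n) = 1, then every neighborhood of x̃₀ in X̃ contains a nonempty subset of X̃_{T'}; in particular X̃_T ∪ X̃_{T'} is a connected subspace of X̃ (provided X̃_T and X̃_{T'} are nonempty intervals with x̃₀ ∈ X̃_T a common limit). -/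
/-!
The point `x₀` is itself a backward orbit of type `T'` once the right branch is taken closed,
`[ρ, 1]` instead of `(ρ, 1]`: its coordinate `x₀ (n + 1) = f₀⁻¹(0) = ρ` is the common endpoint of
the two branches. Since `f` is a homeomorphism on each closed branch, such orbits depend
injectively and continuously on their `0`-th coordinate. Given a genuine orbit `y` of type `T'`,
every value `r ≠ x₀ 0` between `x₀ 0` and `y 0` lifts, by the intermediate value theorem on each
branch, to an orbit of type `T'` squeezed between `x₀` and `y`; the lifts avoid `ρ` because every
coordinate stays positive, away from `f ρ = 0`. Letting `r → x₀ 0` gives orbits of type `T'`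
converging to `x₀ ∈ X̃_T`, which glues the two preconnected sets together.
-/

/-- The set of backward orbits of `f` in `[0,1]` whose branch choices follow the
type `T` (value `0` means the left branch `[0,ρ]`, value `1` the right branch `(ρ,1]`). -/
def typeSet (f : ℝ → ℝ) (ρ : ℝ) (T : ℕ → Fin 2) : Set (ℕ → ℝ) :=
  {x | (∀ n, x n ∈ Set.Icc (0:ℝ) 1) ∧ (∀ n, f (x (n + 1)) = x n) ∧
    ∀ n, (T n = 0 → x (n + 1) ∈ Set.Icc 0 ρ) ∧ (T n = 1 → x (n + 1) ∈ Set.Ioc ρ 1)}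

open Filter Topology Set

theorem Filter.Tendsto.of_comp_of_injOn {X Y ι : Type*} [TopologicalSpace X] [TopologicalSpace Y]
    [T2Space Y] {f : X → Y} {K : Set X} (hK : IsCompact K) (hf : ContinuousOn f K)
    (hinj : InjOn f K) {l : Filter ι} {u : ι → X} {x : X} (hu : ∀ i, u i ∈ K) (hx : x ∈ K)
    (h : Tendsto (f ∘ u) l (𝓝 (f x))) : Tendsto u l (𝓝 x) := by
  have : CompactSpace K := isCompact_iff_compactSpace.mp hK
  have hemb := (hf.domRestrict.isClosedEmbedding hinj.injective).isEmbedding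
  have hu' : Tendsto (fun i => (⟨u i, hu i⟩ : K)) l (𝓝 ⟨x, hx⟩) := hemb.tendsto_nhds_iff.mpr h
  exact continuous_subtype_val.continuousAt.tendsto.comp hu'

theorem IsPreconnected.union_of_mem_closure {X : Type*} [TopologicalSpace X] {s t : Set X}
    {x : X} (hs : IsPreconnected s) (ht : IsPreconnected t) (hxs : x ∈ s)
    (hxt : x ∈ closure t) : IsPreconnected (s ∪ t) := by
  have hins : IsPreconnected (insert x t) :=
    ht.subset_closure (subset_insert x t) (insert_subset hxt subset_closure)
  simpa [union_insert, insert_eq_of_mem (mem_union_left t hxs)] using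
    hs.union x hxs (mem_insert x t) hins

def branch (ρ : ℝ) : Fin 2 → Set ℝ := ![Icc 0 ρ, Icc ρ 1]

@[simp] theorem branch_zero (ρ : ℝ) : branch ρ 0 = Icc 0 ρ := rfl

@[simp] theorem branch_one (ρ : ℝ) : branch ρ 1 = Icc ρ 1 := rfl

theorem isCompact_branch (ρ : ℝ) (i : Fin 2) : IsCompact (branch ρ i) := by
  fin_cases i <;> exact isCompact_Icc

theorem ordConnected_branch (ρ : ℝ) (i : Fin 2) : (branch ρ i).OrdConnected := by
  fin_cases i <;> exact ordConnected_Icc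

def closedTypeSet (f : ℝ → ℝ) (ρ : ℝ) (T : ℕ → Fin 2) : Set (ℕ → ℝ) :=
  {x | (∀ n, x n ∈ Icc (0:ℝ) 1) ∧ (∀ n, f (x (n + 1)) = x n) ∧ ∀ n, x (n + 1) ∈ branch ρ (T n)}

section

variable {f : ℝ → ℝ} {ρ : ℝ} {T : ℕ → Fin 2}

theorem typeSet_subset_closedTypeSet : typeSet f ρ T ⊆ closedTypeSet f ρ T := by
  rintro x ⟨hI, hf, hT⟩
  refine ⟨hI, hf, fun n => ?_⟩
  obtain h | h : T n = 0 ∨ T n = 1 := by omega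
  · simpa [h] using (hT n).1 h
  · simpa [h] using Ioc_subset_Icc_self ((hT n).2 h)

variable (hinj : ∀ i, InjOn f (branch ρ i))
include hinj

theorem eq_of_apply_zero_eq {x y : ℕ → ℝ} (hx : x ∈ closedTypeSet f ρ T)
    (hy : y ∈ closedTypeSet f ρ T) (h0 : x 0 = y 0) : x = y := by
  funext k
  induction k with
  | zero => exact h0
  | succ k ih => exact hinj (T k) (hx.2.2 k) (hy.2.2 k) (by rw [hx.2.1, hy.2.1, ih])

variable (hcont : ∀ i, ContinuousOn f (branch ρ i))
include hcont

theorem tendsto_of_tendsto_apply_zero {ι : Type*} {l : Filter ι} {z : ι → ℕ → ℝ} {x : ℕ → ℝ}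
    (hz : ∀ i, z i ∈ closedTypeSet f ρ T) (hx : x ∈ closedTypeSet f ρ T)
    (h0 : Tendsto (fun i => z i 0) l (𝓝 (x 0))) : Tendsto z l (𝓝 x) := by
  refine tendsto_pi_nhds.mpr fun k => ?_
  induction k with
  | zero => exact h0
  | succ k ih =>
    refine Tendsto.of_comp_of_injOn (isCompact_branch ρ (T k)) (hcont _) (hinj _)
      (fun i => (hz i).2.2 k) (hx.2.2 k) ?_
    simpa only [Function.comp_def, (hz _).2.1, hx.2.1] using ih

variable (hfρ : f ρ = 0)
include hfρ

theorem exists_lift_mem_uIcc {x y : ℕ → ℝ} (hx : x ∈ closedTypeSet f ρ T)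
    (hy : y ∈ typeSet f ρ T) {k : ℕ} {r : ℝ} (hr : r ∈ uIcc (x k) (y k)) (hrx : r ≠ x k) :
    ∃ s ∈ uIcc (x (k + 1)) (y (k + 1)), s ≠ x (k + 1) ∧ f s = r ∧
      (T k = 0 → s ∈ Icc 0 ρ) ∧ (T k = 1 → s ∈ Ioc ρ 1) := by
  have hsub : uIcc (x (k + 1)) (y (k + 1)) ⊆ branch ρ (T k) :=
    (ordConnected_branch ρ (T k)).uIcc_subset (hx.2.2 k)
      ((typeSet_subset_closedTypeSet hy).2.2 k)
  obtain ⟨s, hs, rfl⟩ :=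
    intermediate_value_uIcc ((hcont _).mono hsub) (by rwa [hx.2.1, hy.2.1])
  refine ⟨s, hs, fun h => hrx (by rw [h, hx.2.1]), rfl, fun h => by simpa [h] using hsub hs,
    fun h => ?_⟩
  have hsρ : s ∈ Icc ρ 1 := by simpa [h] using hsub hs
  refine ⟨hsρ.1.lt_of_ne ?_, hsρ.2⟩
  -- `r` lies between `x k ≥ 0` and `y k > 0` and differs from `x k`, so `r > 0 = f ρ`.
  rintro rfl
  have hyk : y k ≠ 0 := by
    have hy1 := (hy.2.2 k).2 h
    rw [← hy.2.1 k, ← hfρ]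
    intro e
    exact hy1.1.ne' (hinj 1 (Ioc_subset_Icc_self hy1) ⟨le_rfl, hy1.1.le.trans hy1.2⟩ e)
  rw [hfρ] at hr hrx
  rcases mem_uIcc.mp hr with ⟨h1, -⟩ | ⟨h1, -⟩
  · exact hrx (le_antisymm (hx.1 k).1 h1)
  · exact hyk (le_antisymm h1 (hy.1 k).1)

theorem exists_mem_typeSet_apply_zero_eq {x y : ℕ → ℝ} (hx : x ∈ closedTypeSet f ρ T)
    (hy : y ∈ typeSet f ρ T) {r : ℝ} (hr : r ∈ uIcc (x 0) (y 0)) (hrx : r ≠ x 0) :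
    ∃ z ∈ typeSet f ρ T, z 0 = r := by
  let P (k : ℕ) (r : ℝ) : Prop := r ∈ uIcc (x k) (y k) ∧ r ≠ x k
  choose g hg using fun k (r : {r // P k r}) =>
    exists_lift_mem_uIcc hinj hcont hfρ hx hy r.2.1 r.2.2
  let z : ∀ k, {r // P k r} := fun k =>
    Nat.rec (motive := fun k => {r // P k r}) ⟨r, hr, hrx⟩
      (fun k r => ⟨g k r, (hg k r).1, (hg k r).2.1⟩) k
  refine ⟨fun k => z k, ⟨fun k => ?_, fun k => (hg k (z k)).2.2.1, fun k => (hg k (z k)).2.2.2⟩,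
    rfl⟩
  exact uIcc_subset_Icc (hx.1 k) (hy.1 k) (z k).2.1

theorem mem_closure_typeSet {x y : ℕ → ℝ} (hx : x ∈ closedTypeSet f ρ T)
    (hy : y ∈ typeSet f ρ T) (h0 : x 0 ≠ y 0) : x ∈ closure (typeSet f ρ T) := by
  have hr (m : ℕ) : AffineMap.lineMap (x 0) (y 0) (1 / ((m : ℝ) + 1)) ∈ uIcc (x 0) (y 0) ∧
      AffineMap.lineMap (x 0) (y 0) (1 / ((m : ℝ) + 1)) ≠ x 0 := by
    have ht : 1 / ((m : ℝ) + 1) ∈ Icc 0 1 :=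
      ⟨by positivity, div_le_one_of_le₀ (by linarith) (by positivity)⟩
    refine ⟨segment_eq_uIcc (x 0) (y 0) ▸ lineMap_mem_segment ℝ _ _ ht, ?_⟩
    rw [Ne, AffineMap.lineMap_eq_left_iff, not_or]
    exact ⟨h0, by positivity⟩
  choose z hz hz0 using fun m =>
    exists_mem_typeSet_apply_zero_eq hinj hcont hfρ hx hy (hr m).1 (hr m).2
  refine mem_closure_of_tendsto (tendsto_of_tendsto_apply_zero (l := atTop) hinj hcont
    (fun m => typeSet_subset_closedTypeSet (hz m)) hx ?_) (Eventually.of_forall hz)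
  simp only [hz0]
  simpa [Function.comp_def] using
    ((AffineMap.lineMap_continuous (R := ℝ) (p := x 0) (q := y 0)).tendsto 0).comp
      tendsto_one_div_add_atTop_nhds_zero_nat

end

theorem injOn_Icc_of_eq_div {f : ℝ → ℝ} {ρ : ℝ} (hρ1 : ρ < 1) (hfρ : f ρ = 0)
    (hright : ∀ x ∈ Ioc ρ 1, f x = (x - ρ) / (1 - ρ)) : InjOn f (Icc ρ 1) := by
  have hIcc : ∀ x ∈ Icc ρ 1, f x = (x - ρ) / (1 - ρ) := by
    rintro x ⟨hρx, hx1⟩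
    rcases hρx.eq_or_lt with rfl | hρx
    · rw [hfρ, sub_self, zero_div]
    · exact hright x ⟨hρx, hx1⟩
  intro a ha b hb hab
  rw [hIcc a ha, hIcc b hb, div_left_inj' (sub_ne_zero.mpr hρ1.ne')] at hab
  linarith

theorem cement_lemma_general (ρ : ℝ) (hρ : 0 < ρ) (hρ1 : ρ < 1)
    (f : ℝ → ℝ) (hcont : ContinuousOn f (Set.Icc 0 1))
    (hanti : StrictAntiOn f (Set.Icc 0 ρ)) (hfρ : f ρ = 0)
    (hright : ∀ x ∈ Set.Ioc ρ 1, f x = (x - ρ) / (1 - ρ))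
    (T T' : ℕ → Fin 2) (n : ℕ)
    (hagree : ∀ k, k ≠ n → T' k = T k) (hTn : T n = 0) (hT'n : T' n = 1)
    (x₀ : ℕ → ℝ) (hx₀ : x₀ ∈ typeSet f ρ T) (hx₀n : x₀ n = 0)
    (hTconn : IsPreconnected (typeSet f ρ T))
    (hT'conn : IsPreconnected (typeSet f ρ T'))
    (hT'ne : (typeSet f ρ T').Nonempty) :
    x₀ ∈ closure (typeSet f ρ T') ∧
      IsConnected (typeSet f ρ T ∪ typeSet f ρ T') := by
  have hcont' : ∀ i, ContinuousOn f (branch ρ i) := Fin.forall_fin_two.mpr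
    ⟨hcont.mono (Icc_subset_Icc le_rfl hρ1.le), hcont.mono (Icc_subset_Icc hρ.le le_rfl)⟩
  have hinj : ∀ i, InjOn f (branch ρ i) :=
    Fin.forall_fin_two.mpr ⟨hanti.injOn, injOn_Icc_of_eq_div hρ1 hfρ hright⟩
  have hx₀ρ : x₀ (n + 1) = ρ :=
    hinj 0 ((hx₀.2.2 n).1 hTn) ⟨hρ.le, le_rfl⟩ (by rw [hx₀.2.1, hx₀n, hfρ])
  have hx₀' : x₀ ∈ closedTypeSet f ρ T' := by
    refine ⟨hx₀.1, hx₀.2.1, fun k => ?_⟩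
    by_cases hk : k = n
    · subst hk
      rw [hT'n, hx₀ρ]
      exact ⟨le_rfl, hρ1.le⟩
    · rw [hagree k hk]
      exact (typeSet_subset_closedTypeSet hx₀).2.2 k
  obtain ⟨y, hy⟩ := hT'ne
  have h0 : x₀ 0 ≠ y 0 := fun h => by
    have := eq_of_apply_zero_eq hinj hx₀' (typeSet_subset_closedTypeSet hy) h
    exact ((hy.2.2 n).2 hT'n).1.ne (by rw [← this, hx₀ρ])
  have hcl := mem_closure_typeSet hinj hcont' hfρ hx₀' hy h0
  exact ⟨hcl, ⟨x₀, Or.inl hx₀⟩, hTconn.union_of_mem_closure hT'conn hx₀ hcl⟩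

theorem cement_lemma (ρ : ℝ) (hρ : 0 < ρ) (hρ1 : ρ < 1)
    (f : ℝ → ℝ) (hcont : ContinuousOn f (Set.Icc 0 1))
    (hmaps : Set.MapsTo f (Set.Icc 0 1) (Set.Icc 0 1))
    (hanti : StrictAntiOn f (Set.Icc 0 ρ)) (hfρ : f ρ = 0)
    (hright : ∀ x ∈ Set.Ioc ρ 1, f x = (x - ρ) / (1 - ρ))
    (T T' : ℕ → Fin 2) (n : ℕ)
    (hagree : ∀ k, k ≠ n → T' k = T k) (hTn : T n = 0) (hT'n : T' n = 1)
    (x₀ : ℕ → ℝ) (hx₀ : x₀ ∈ typeSet f ρ T) (hx₀n : x₀ n = 0)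
    (hTconn : IsPreconnected (typeSet f ρ T))
    (hT'conn : IsPreconnected (typeSet f ρ T'))
    (hT'ne : (typeSet f ρ T').Nonempty) :
    x₀ ∈ closure (typeSet f ρ T') ∧
      IsConnected (typeSet f ρ T ∪ typeSet f ρ T') :=
  cement_lemma_general ρ hρ hρ1 f hcont hanti hfρ hright T T' n hagree hTn hT'n x₀ hx₀ hx₀n hTconn
    hT'conn hT'ne
end
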